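/- For N = 3, the Grover algorithm matrix U₃ has infinite period: there is no integer t ≥ 1 with U₃^t = I₃. -/
import Mathlib

/-- The `3 × 3` Grover algorithm matrix `U₃`. -/
noncomputable def groverU3 : Matrix (Fin 3) (Fin 3) ℝ :=
  (1 / 3 : ℝ) • !![1, 2, 2; -2, -1, 2; -2, 2, -1]

private def Mz : Matrix (Fin 3) (Fin 3) ℤ := !![1, 2, 2; -2, -1, 2; -2, 2, -1]

private def A3 : Matrix (Fin 3) (Fin 3) (ZMod 3) := !![1, 2, 2; 1, 2, 2; 1, 2, 2]

private lemma three_smul_one {R : Type*} [CommRing R] :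
    (3 : Matrix (Fin 3) (Fin 3) R) = (3 : R) • 1 := by
  ext i j
  fin_cases i <;> fin_cases j <;>
    simp [Matrix.one_apply, Matrix.smul_apply] <;>
    rfl

private lemma map_Mz_real : (Int.castRingHom ℝ).mapMatrix Mz = (3 : ℝ) • groverU3 := by
  have h1 : (3 : ℝ) • groverU3 = !![1, 2, 2; -2, -1, 2; -2, 2, -1] := by
    rw [groverU3, smul_smul]
    norm_num
  rw [h1]
  ext i j
  fin_cases i <;> fin_cases j <;> simp [Mz, Matrix.map_apply, Matrix.vecHead, Matrix.vecTail]

private lemma map_Mz_zmod : (Int.castRingHom (ZMod 3)).mapMatrix Mz = A3 := by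
  ext i j
  fin_cases i <;> fin_cases j <;> simp [Mz, A3, Matrix.map_apply] <;> decide

private lemma A3_cube : A3 ^ 3 = A3 := by decide

private lemma A3_pow_ne (t : ℕ) : A3 ^ (t + 1) ≠ 0 := by
  have key : ∀ t : ℕ, A3 ^ (t + 1) = A3 ∨ A3 ^ (t + 1) = A3 ^ 2 := by
    intro t
    induction t with
    | zero => left; simp
    | succ n ih =>
      rcases ih with h | h
      · right; rw [pow_succ, h, sq]
      · left
        have : A3 ^ (n + 1 + 1) = A3 ^ 3 := by rw [pow_succ, h, ← pow_succ]
        rw [this, A3_cube]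
  rcases key t with h | h <;> rw [h] <;> decide

/-- `U₃` has infinite period: no power `U₃^t` with `t ≥ 1` is the identity. -/
theorem stmt_9 : ∀ t : ℕ, 1 ≤ t → groverU3 ^ t ≠ 1 := by
  intro t ht h
  -- Step 1: Mz ^ t = 3 ^ t over ℤ (as scalar matrix)
  have hMz : Mz ^ t = (3 : Matrix (Fin 3) (Fin 3) ℤ) ^ t := by
    have hmap : (Int.castRingHom ℝ).mapMatrix (Mz ^ t)
        = (Int.castRingHom ℝ).mapMatrix ((3 : Matrix (Fin 3) (Fin 3) ℤ) ^ t) := by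
      rw [map_pow, map_pow, map_Mz_real, smul_pow, h, map_ofNat, three_smul_one (R := ℝ),
        smul_pow, one_pow]
    ext i j
    have := congrFun (congrFun (congrArg (fun M => (M : Matrix (Fin 3) (Fin 3) ℝ)) hmap) i) j
    simp only [RingHom.mapMatrix_apply, Matrix.map_apply, Int.coe_castRingHom] at this
    exact_mod_cast this
  -- Step 2: push to ZMod 3
  have h3 : A3 ^ t = 0 := by
    have := congrArg (Int.castRingHom (ZMod 3)).mapMatrix hMz
    rw [map_pow, map_pow, map_Mz_zmod, map_ofNat, three_smul_one (R := ZMod 3)] at this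
    have h30 : (3 : ZMod 3) = 0 := by decide
    rw [this, h30, zero_smul, zero_pow (Nat.one_le_iff_ne_zero.mp ht)]
  obtain ⟨s, rfl⟩ := Nat.exists_eq_add_of_le ht
  rw [add_comm] at h3
  exact A3_pow_ne s h3
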